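/- arXiv:1508.05503 — 2 statements merged into one kernel-verified Lean document; each statement's English description precedes it below -/
import Mathlib

section
/- Let 𝒫 be a family of probability distributions on {0,1}^n and suppose there is an integer r with 0 < r < n such that the number of positive outcomes n_1(Y) equals r almost surely under every P ∈ 𝒫. Then the AUC is a strictly R*-proper scoring function for 𝒫: for every P ∈ 𝒫 and every total preorder ≾ on {1,...,n}, E_P[AUC(Y, ≾)] ≤ E_P[AUC(Y, t)] for all t ∈ R*(P), with equality if and only if ≾ ∈ R*(P). -/
open scoped BigOperators

/-- A total preorder on `Fin n`: reflexive, transitive and total. -/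
structure TotalPreorder (n : ℕ) where
  rel : Fin n → Fin n → Bool
  refl : ∀ i, rel i i = true
  trans : ∀ i j k, rel i j = true → rel j k = true → rel i k = true
  total : ∀ i j, rel i j = true ∨ rel j i = true

namespace TotalPreorder

/-- The rank vector `ρ_i(≾) = Σ_j (1_{j ≾ i} − 1_{j ≿ i})`. -/
def rho {n : ℕ} (p : TotalPreorder n) (i : Fin n) : ℝ :=
  ∑ j, ((if p.rel j i then (1 : ℝ) else 0) - (if p.rel i j then (1 : ℝ) else 0))

/-- The total preorder induced by a vector `v`: `i ≾ j ↔ v i ≤ v j`. -/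
noncomputable def induced {n : ℕ} (v : Fin n → ℝ) : TotalPreorder n where
  rel i j := decide (v i ≤ v j)
  refl i := by simp
  trans i j k := by
    simp only [decide_eq_true_eq]
    exact le_trans
  total i j := by
    simp only [decide_eq_true_eq]
    exact le_total _ _

/-- `p` is contained in `q` if `i ≾_p j` implies `i ≾_q j`. -/
def contained {n : ℕ} (p q : TotalPreorder n) : Prop :=
  ∀ i j, p.rel i j = true → q.rel i j = true

end TotalPreorder

open TotalPreorder

/-- Expectation of a real-valued function of a binary random vector. -/
noncomputable def pexp {n : ℕ} (P : PMF (Fin n → Bool)) (f : (Fin n → Bool) → ℝ) : ℝ :=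
  ∑ y : Fin n → Bool, (P y).toReal * f y

/-- The marginal functional: `M(P)_i = P[Y_i = 1]`. -/
noncomputable def margin {n : ℕ} (P : PMF (Fin n → Bool)) (i : Fin n) : ℝ :=
  pexp P (fun y => if y i then 1 else 0)

/-- Membership in the weak rank functional `R*(P)`: a total preorder contained in
the preorder induced by the marginal means. -/
def RstarMem {n : ℕ} (P : PMF (Fin n → Bool)) (p : TotalPreorder n) : Prop :=
  p.contained (TotalPreorder.induced (margin P))

/-- Number of positive outcomes. -/
def n1 {n : ℕ} (y : Fin n → Bool) : ℕ := ∑ i, if y i then 1 else 0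

/-- Number of negative outcomes. -/
def n0 {n : ℕ} (y : Fin n → Bool) : ℕ := n - n1 y

/-- AUC weights `α_i(y)`. -/
noncomputable def alpha {n : ℕ} (y : Fin n → Bool) (i : Fin n) : ℝ :=
  if 0 < n1 y ∧ n1 y < n then (if y i then 1 else 0) / ((n0 y : ℝ) * (n1 y : ℝ)) else 0

/-- The empirical area under the ROC curve. -/
noncomputable def AUC {n : ℕ} (y : Fin n → Bool) (p : TotalPreorder n) : ℝ :=
  1 / 2 + 1 / 2 * ∑ i, alpha y i * rho p i

/-- `s` is an `R*`-proper scoring function for the family `F`. -/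
def RStarProper {n : ℕ} (s : (Fin n → Bool) → TotalPreorder n → ℝ)
    (F : Set (PMF (Fin n → Bool))) : Prop :=
  ∀ P ∈ F, ∀ p t : TotalPreorder n, RstarMem P t →
    pexp P (fun y => s y p) ≤ pexp P (fun y => s y t)

/-- `s` is a strictly `R*`-proper scoring function for the family `F`. -/
def StrictlyRStarProper {n : ℕ} (s : (Fin n → Bool) → TotalPreorder n → ℝ)
    (F : Set (PMF (Fin n → Bool))) : Prop :=
  ∀ P ∈ F, ∀ p t : TotalPreorder n, RstarMem P t →
    pexp P (fun y => s y p) ≤ pexp P (fun y => s y t) ∧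
      (pexp P (fun y => s y p) = pexp P (fun y => s y t) ↔ RstarMem P p)

/-!
Since `n₁(Y) = r` almost surely, the AUC weights are almost surely `α_i(Y) = Y_i / ((n - r) r)`,
so by linearity `E_P[AUC(Y, ≾)] = 1/2 + Σ_i m_i ρ_i(≾) / (2 (n - r) r)` with `m = M(P)` the
marginals. Expanding the rank vector, `Σ_i m_i ρ_i(≾) = Σ_{j ≾ i} (m_i - m_j)`, and each term is
at most `(m_i - m_j)⁺`. The resulting bound does not depend on `≾`, and it is attained exactly when
`j ≾ i` never holds with `m_j > m_i`, i.e. when `≾ ∈ R*(P)`.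
-/

namespace TotalPreorder

variable {n : ℕ}

def pairGain (q : TotalPreorder n) (m : Fin n → ℝ) (x : Fin n × Fin n) : ℝ :=
  if q.rel x.2 x.1 then m x.1 - m x.2 else 0

theorem contained_induced_iff (q : TotalPreorder n) (m : Fin n → ℝ) :
    q.contained (induced m) ↔ ∀ i j, q.rel i j = true → m i ≤ m j := by
  simp only [contained, induced, decide_eq_true_eq]

theorem sum_mul_rho_eq_sum_pairGain (q : TotalPreorder n) (m : Fin n → ℝ) :
    ∑ i, m i * q.rho i = ∑ x, q.pairGain m x := by
  have swap : ∑ i, ∑ j, m i * (if q.rel i j then (1 : ℝ) else 0) =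
      ∑ i, ∑ j, m j * (if q.rel j i then (1 : ℝ) else 0) := Finset.sum_comm
  simp only [rho, Finset.mul_sum, mul_sub, Finset.sum_sub_distrib]
  rw [swap, ← Finset.sum_sub_distrib, Fintype.sum_prod_type]
  refine Finset.sum_congr rfl fun i _ => ?_
  rw [← Finset.sum_sub_distrib]
  refine Finset.sum_congr rfl fun j _ => ?_
  simp only [pairGain]
  split_ifs <;> ring

theorem pairGain_le_max (q : TotalPreorder n) (m : Fin n → ℝ) (x : Fin n × Fin n) :
    q.pairGain m x ≤ max (m x.1 - m x.2) 0 := by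
  unfold pairGain
  split_ifs
  exacts [le_max_left _ _, le_max_right _ _]

theorem contained_induced_iff_forall_pairGain_eq (q : TotalPreorder n) (m : Fin n → ℝ) :
    q.contained (induced m) ↔ ∀ x, q.pairGain m x = max (m x.1 - m x.2) 0 := by
  rw [contained_induced_iff]
  constructor
  · rintro hq ⟨i, j⟩
    unfold pairGain
    split_ifs with hji
    · exact (max_eq_left (sub_nonneg.mpr (hq j i hji))).symm
    · have hij : m i ≤ m j := hq i j ((q.total i j).resolve_right hji)
      exact (max_eq_right (sub_nonpos.mpr hij)).symm
  · intro hq i j hij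
    have h := hq (j, i)
    simp only [pairGain, hij, if_true] at h
    exact sub_nonneg.mp (h ▸ le_max_right _ _)

theorem sum_mul_rho_le (q : TotalPreorder n) (m : Fin n → ℝ) :
    ∑ i, m i * q.rho i ≤ ∑ x : Fin n × Fin n, max (m x.1 - m x.2) 0 := by
  rw [sum_mul_rho_eq_sum_pairGain]
  exact Finset.sum_le_sum fun x _ => q.pairGain_le_max m x

theorem sum_mul_rho_eq_iff_contained (q : TotalPreorder n) (m : Fin n → ℝ) :
    ∑ i, m i * q.rho i = ∑ x : Fin n × Fin n, max (m x.1 - m x.2) 0 ↔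
      q.contained (induced m) := by
  rw [sum_mul_rho_eq_sum_pairGain, Finset.sum_eq_sum_iff_of_le fun x _ => q.pairGain_le_max m x,
    contained_induced_iff_forall_pairGain_eq]
  simp only [Finset.mem_univ, true_implies]

end TotalPreorder

open TotalPreorder

section Expectation

variable {n : ℕ}

theorem PMF.sum_toReal_eq_one {α : Type*} [Fintype α] (P : PMF α) : ∑ a, (P a).toReal = 1 := by
  rw [← ENNReal.toReal_sum fun a _ => P.apply_ne_top a, ← tsum_fintype (L := .unconditional _),
    P.tsum_coe, ENNReal.toReal_one]

theorem pexp_congr {P : PMF (Fin n → Bool)} {f g : (Fin n → Bool) → ℝ}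
    (h : ∀ y, P y ≠ 0 → f y = g y) : pexp P f = pexp P g := by
  refine Finset.sum_congr rfl fun y _ => ?_
  by_cases hy : P y = 0
  · simp [hy]
  · rw [h y hy]

theorem pexp_const_add_mul_sum_margin (P : PMF (Fin n → Bool)) (a b : ℝ) (w : Fin n → ℝ) :
    pexp P (fun y => a + b * ∑ i, (if y i then 1 else 0) * w i) =
      a + b * ∑ i, margin P i * w i := by
  simp only [pexp, mul_add, Finset.sum_add_distrib, ← Finset.sum_mul, PMF.sum_toReal_eq_one, one_mul]
  simp only [margin, pexp, Finset.mul_sum, Finset.sum_mul]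
  rw [Finset.sum_comm]
  exact congrArg _ (Finset.sum_congr rfl fun i _ => Finset.sum_congr rfl fun y _ => by ring)

theorem AUC_eq_of_n1_pos_of_n1_lt {y : Fin n → Bool} (h0 : 0 < n1 y) (hn : n1 y < n)
    (q : TotalPreorder n) :
    AUC y q = 1 / 2 + (2 * (n0 y : ℝ) * n1 y)⁻¹ * ∑ i, (if y i then 1 else 0) * q.rho i := by
  simp only [AUC, alpha, if_pos (And.intro h0 hn), div_eq_mul_inv, Finset.mul_sum]
  exact congrArg _ (Finset.sum_congr rfl fun i _ => by ring)

theorem pexp_AUC_of_n1_eq {r : ℕ} (hr0 : 0 < r) (hrn : r < n) {P : PMF (Fin n → Bool)}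
    (hP : ∀ y, P y ≠ 0 → n1 y = r) (q : TotalPreorder n) :
    pexp P (fun y => AUC y q) =
      1 / 2 + (2 * ((n - r : ℕ) : ℝ) * r)⁻¹ * ∑ i, margin P i * q.rho i := by
  rw [← pexp_const_add_mul_sum_margin]
  refine pexp_congr fun y hy => ?_
  have hy1 := hP y hy
  rw [AUC_eq_of_n1_pos_of_n1_lt (hy1 ▸ hr0) (hy1 ▸ hrn), n0, hy1]

end Expectation

/-- if the number of positive outcomes is almost surely a constant `r`
with `0 < r < n` under every member of the family, then AUC is strictly `R*`-proper. -/
theorem auc_strictly_Rstar_proper_of_known_sum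
    {n : ℕ} (r : ℕ) (hr0 : 0 < r) (hrn : r < n)
    (F : Set (PMF (Fin n → Bool)))
    (hF : ∀ P ∈ F, ∀ y : Fin n → Bool, P y ≠ 0 → n1 y = r) :
    StrictlyRStarProper (fun y p => AUC y p) F := by
  intro P hPF p t ht
  have hc : 0 < (2 * ((n - r : ℕ) : ℝ) * r)⁻¹ := by
    have hnr : 0 < n - r := Nat.sub_pos_of_lt hrn
    positivity
  simp only [pexp_AUC_of_n1_eq hr0 hrn (hF P hPF), (t.sum_mul_rho_eq_iff_contained _).mpr ht]
  refine ⟨by gcongr; exact p.sum_mul_rho_le _, ?_⟩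
  rw [add_right_inj, mul_right_inj' hc.ne']
  exact p.sum_mul_rho_eq_iff_contained _
end

section
/- Let 𝒫 be a family of probability distributions on {0,1}^n under each of which the coordinates Y_1, ..., Y_n are mutually independent. Then the AUC is a strictly R*-proper scoring function for 𝒫: for every P ∈ 𝒫 and every total preorder ≾ on {1,...,n}, E_P[AUC(Y, ≾)] ≤ E_P[AUC(Y, t)] for all t ∈ R*(P), with equality if and only if ≾ ∈ R*(P). -/
open scoped BigOperators

open TotalPreorder

/- ### Auxiliary lemmas -/

open Finset

lemma sum_toReal_eq_one {n : ℕ} (P : PMF (Fin n → Bool)) :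
    ∑ y : Fin n → Bool, (P y).toReal = 1 := by
  have h := P.tsum_coe
  rw [tsum_fintype] at h
  rw [← ENNReal.toReal_sum (fun y _ =>
    (ne_top_of_le_ne_top ENNReal.one_ne_top (PMF.coe_le_one P y))), h, ENNReal.toReal_one]

lemma margin_nonneg {n : ℕ} (P : PMF (Fin n → Bool)) (i : Fin n) : 0 ≤ margin P i := by
  apply Finset.sum_nonneg; intro y _; positivity

lemma margin_le_one {n : ℕ} (P : PMF (Fin n → Bool)) (i : Fin n) : margin P i ≤ 1 := by
  calc margin P i ≤ ∑ y : Fin n → Bool, (P y).toReal := by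
        apply Finset.sum_le_sum
        intro y _
        rcases Classical.em (y i) with h | h <;> simp [h, ENNReal.toReal_nonneg]
    _ = 1 := sum_toReal_eq_one P

lemma n1_pos {n : ℕ} {y : Fin n → Bool} {i : Fin n} (h : y i = true) : 0 < n1 y := by
  have : (1:ℕ) ≤ n1 y := by
    calc (1:ℕ) = if y i then 1 else 0 := by simp [h]
      _ ≤ n1 y := Finset.single_le_sum (f := fun k => if y k then 1 else 0)
          (fun k _ => by positivity) (mem_univ i)
  omega

lemma n1_lt {n : ℕ} {y : Fin n → Bool} {j : Fin n} (h : y j = false) : n1 y < n := by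
  have h1 : n1 y = ∑ k ∈ univ.erase j, if y k then 1 else 0 := by
    unfold n1
    rw [← Finset.sum_erase_add _ _ (mem_univ j), h]
    simp
  have h2 : (∑ k ∈ univ.erase j, if y k then 1 else 0) ≤ (univ.erase j).card := by
    apply Finset.sum_le_card_nsmul (univ.erase j) _ 1 (fun k _ => by split <;> omega) |>.trans
    simp
  have h3 : (univ.erase j).card = n - 1 := by
    rw [Finset.card_erase_of_mem (mem_univ j)]; simp
  have hn : 0 < n := j.pos
  omega

def swapFun {n : ℕ} (i j : Fin n) (y : Fin n → Bool) : Fin n → Bool :=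
  fun k => y (Equiv.swap i j k)

lemma swapFun_invol {n : ℕ} (i j : Fin n) : Function.Involutive (swapFun i j) := by
  intro y; funext k; simp [swapFun]

lemma n1_swapFun {n : ℕ} (i j : Fin n) (y : Fin n → Bool) : n1 (swapFun i j y) = n1 y :=
  Equiv.sum_comp (Equiv.swap i j) (fun k => if y k then 1 else 0)

lemma sum_swapFun {n : ℕ} (i j : Fin n) (g : (Fin n → Bool) → ℝ) :
    ∑ y : Fin n → Bool, g (swapFun i j y) = ∑ y : Fin n → Bool, g y :=
  Equiv.sum_comp ((swapFun_invol i j).toPerm _) g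

lemma swapFun_apply_left {n : ℕ} (i j : Fin n) (y : Fin n → Bool) :
    swapFun i j y i = y j := by simp [swapFun]

lemma swapFun_apply_right {n : ℕ} (i j : Fin n) (y : Fin n → Bool) :
    swapFun i j y j = y i := by simp [swapFun]

lemma swapFun_apply_other {n : ℕ} {i j k : Fin n} (hki : k ≠ i) (hkj : k ≠ j)
    (y : Fin n → Bool) : swapFun i j y k = y k := by
  simp [swapFun, Equiv.swap_apply_of_ne_of_ne hki hkj]

lemma alpha_swapFun_left {n : ℕ} (i j : Fin n) (y : Fin n → Bool) :
    alpha (swapFun i j y) i = alpha y j := by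
  unfold alpha n0
  rw [n1_swapFun, swapFun_apply_left]

lemma alpha_swapFun_right {n : ℕ} (i j : Fin n) (y : Fin n → Bool) :
    alpha (swapFun i j y) j = alpha y i := by
  unfold alpha n0
  rw [n1_swapFun, swapFun_apply_right]

set_option maxHeartbeats 1000000 in
/-- The key independence computation: the difference of the expected AUC weights at two
coordinates is a positive multiple of the difference of the marginal means. -/
lemma key {n : ℕ} (P : PMF (Fin n → Bool))
    (hP : ∀ y : Fin n → Bool, (P y).toReal = ∏ k, (if y k then margin P k else 1 - margin P k))
    {i j : Fin n} (hij : i ≠ j) :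
    ∃ S : ℝ, 0 < S ∧
      pexp P (fun y => alpha y i) - pexp P (fun y => alpha y j)
        = (margin P i - margin P j) * S := by
  classical
  set w : Fin n → Bool → ℝ := fun k b => if b then margin P k else 1 - margin P k with hw
  set R : (Fin n → Bool) → ℝ := fun y => ∏ k ∈ (univ.erase i).erase j, w k (y k) with hR
  set g : (Fin n → Bool) → ℝ := fun y => |alpha y i - alpha y j| * R y with hg
  have hjmem : j ∈ univ.erase i := Finset.mem_erase.2 ⟨hij.symm, mem_univ j⟩
  have hsplit : ∀ z : Fin n → Bool, (P z).toReal = w i (z i) * (w j (z j) * R z) := by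
    intro z
    rw [hP z, ← Finset.mul_prod_erase univ (fun k => w k (z k)) (mem_univ i),
        ← Finset.mul_prod_erase _ (fun k => w k (z k)) hjmem]
  have hRswap : ∀ y, R (swapFun i j y) = R y := by
    intro y
    apply Finset.prod_congr rfl
    intro k hk
    rw [Finset.mem_erase] at hk
    obtain ⟨hkj, hk'⟩ := hk
    rw [Finset.mem_erase] at hk'
    rw [swapFun_apply_other hk'.1 hkj]
  have hRnonneg : ∀ y, 0 ≤ R y := by
    intro y
    apply Finset.prod_nonneg
    intro k _
    rcases Classical.em (y k = true) with h | h
    · simp only [hw, h, if_true]; exact margin_nonneg P k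
    · simp only [hw, Bool.not_eq_true] at *; simp only [h, Bool.false_eq_true, if_false]
      linarith [margin_le_one P k]
  -- pointwise identity
  have hpoint : ∀ y, ((P y).toReal - (P (swapFun i j y)).toReal) * (alpha y i - alpha y j)
      = (margin P i - margin P j) * g y := by
    intro y
    rcases Classical.em (y i = true) with hyi | hyi <;>
      rcases Classical.em (y j = true) with hyj | hyj
    · have : alpha y i = alpha y j := by unfold alpha; rw [hyi, hyj]
      simp [hg, this]
    · -- y i = true, y j = false
      rw [Bool.not_eq_true] at hyj
      have h1 : 0 < n1 y := n1_pos hyi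
      have h2 : n1 y < n := n1_lt hyj
      have hd : alpha y i - alpha y j = 1 / ((n0 y : ℝ) * (n1 y : ℝ)) := by
        unfold alpha; rw [hyi, hyj]; simp [h1, h2]
      have habs : |alpha y i - alpha y j| = 1 / ((n0 y : ℝ) * (n1 y : ℝ)) := by
        rw [hd]; exact abs_of_nonneg (by positivity)
      have hPy : (P y).toReal = margin P i * ((1 - margin P j) * R y) := by
        rw [hsplit y, hw]; simp [hyi, hyj]
      have hPsy : (P (swapFun i j y)).toReal = (1 - margin P i) * (margin P j * R y) := by
        rw [hsplit (swapFun i j y), hRswap, swapFun_apply_left, swapFun_apply_right,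
          hyi, hyj, hw]
        simp
      rw [hPy, hPsy, hd, hg]
      simp only [habs]
      ring
    · -- y i = false, y j = true
      rw [Bool.not_eq_true] at hyi
      have h1 : 0 < n1 y := n1_pos hyj
      have h2 : n1 y < n := n1_lt hyi
      have hd : alpha y i - alpha y j = -(1 / ((n0 y : ℝ) * (n1 y : ℝ))) := by
        unfold alpha; rw [hyi, hyj]; simp [h1, h2]
      have habs : |alpha y i - alpha y j| = 1 / ((n0 y : ℝ) * (n1 y : ℝ)) := by
        rw [hd, abs_neg]; exact abs_of_nonneg (by positivity)
      have hPy : (P y).toReal = (1 - margin P i) * (margin P j * R y) := by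
        rw [hsplit y, hw]; simp [hyi, hyj]
      have hPsy : (P (swapFun i j y)).toReal = margin P i * ((1 - margin P j) * R y) := by
        rw [hsplit (swapFun i j y), hRswap, swapFun_apply_left, swapFun_apply_right,
          hyi, hyj, hw]
        simp
      rw [hPy, hPsy, hd, hg]
      simp only [habs]
      ring
    · rw [Bool.not_eq_true] at hyi hyj
      have : alpha y i = alpha y j := by unfold alpha; rw [hyi, hyj]
      simp [hg, this]
  -- summing
  have e1 : pexp P (fun y => alpha y i) - pexp P (fun y => alpha y j)
      = ∑ y : Fin n → Bool, (P y).toReal * (alpha y i - alpha y j) := by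
    unfold pexp
    rw [← Finset.sum_sub_distrib]
    exact Finset.sum_congr rfl (fun y _ => by ring)
  have e2 : ∑ y : Fin n → Bool, (P (swapFun i j y)).toReal * (alpha y i - alpha y j)
      = -(pexp P (fun y => alpha y i) - pexp P (fun y => alpha y j)) := by
    have := sum_swapFun i j (fun y => (P (swapFun i j y)).toReal * (alpha y i - alpha y j))
    rw [← this]
    have e3 : ∀ y : Fin n → Bool,
        (P (swapFun i j (swapFun i j y))).toReal *
          (alpha (swapFun i j y) i - alpha (swapFun i j y) j)
        = (P y).toReal * (alpha y j - alpha y i) := by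
      intro y
      rw [swapFun_invol i j y, alpha_swapFun_left, alpha_swapFun_right]
    rw [Finset.sum_congr rfl (fun y _ => e3 y), e1, ← Finset.sum_neg_distrib]
    exact Finset.sum_congr rfl (fun y _ => by ring)
  have hsum : 2 * (pexp P (fun y => alpha y i) - pexp P (fun y => alpha y j))
      = (margin P i - margin P j) * ∑ y : Fin n → Bool, g y := by
    calc 2 * (pexp P (fun y => alpha y i) - pexp P (fun y => alpha y j))
        = (∑ y : Fin n → Bool, (P y).toReal * (alpha y i - alpha y j))
          - ∑ y : Fin n → Bool, (P (swapFun i j y)).toReal * (alpha y i - alpha y j) := by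
          rw [e2, ← e1]; ring
      _ = ∑ y : Fin n → Bool, ((P y).toReal - (P (swapFun i j y)).toReal)
            * (alpha y i - alpha y j) := by
          rw [← Finset.sum_sub_distrib]
          exact Finset.sum_congr rfl (fun y _ => (sub_mul _ _ _).symm)
      _ = ∑ y : Fin n → Bool, (margin P i - margin P j) * g y :=
          Finset.sum_congr rfl (fun y _ => hpoint y)
      _ = (margin P i - margin P j) * ∑ y : Fin n → Bool, g y := (Finset.mul_sum _ _ _).symm
  -- positivity of the sum
  have hgnonneg : ∀ y, 0 ≤ g y := fun y => mul_nonneg (abs_nonneg _) (hRnonneg y)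
  set y0 : Fin n → Bool := fun k => if k = j then false else if k = i then true
    else decide (0 < margin P k) with hy0
  have hy0i : y0 i = true := by simp [hy0, hij]
  have hy0j : y0 j = false := by simp [hy0]
  have h1 : 0 < n1 y0 := n1_pos hy0i
  have h2 : n1 y0 < n := n1_lt hy0j
  have hgy0 : 0 < g y0 := by
    have hd : alpha y0 i - alpha y0 j = 1 / ((n0 y0 : ℝ) * (n1 y0 : ℝ)) := by
      unfold alpha; rw [hy0i, hy0j]; simp [h1, h2]
    have hn0 : 0 < n0 y0 := by unfold n0; omega
    have habs : 0 < |alpha y0 i - alpha y0 j| := by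
      rw [hd, abs_of_nonneg (by positivity)]
      have : (0:ℝ) < (n0 y0 : ℝ) * (n1 y0 : ℝ) := by
        apply mul_pos <;> exact_mod_cast (by omega : (0:ℕ) < _)
      positivity
    have hRpos : 0 < R y0 := by
      apply Finset.prod_pos
      intro k hk
      rw [Finset.mem_erase] at hk
      obtain ⟨hkj, hk'⟩ := hk
      rw [Finset.mem_erase] at hk'
      have : y0 k = decide (0 < margin P k) := by simp [hy0, hkj, hk'.1]
      rcases Classical.em (0 < margin P k) with h | h
      · simp only [hw, this, decide_eq_true h, if_true]; exact h
      · have : y0 k = false := by rw [this]; simpa using h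
        simp only [hw, this, Bool.false_eq_true, if_false]
        have := margin_nonneg P k
        have h' : margin P k = 0 := by push_neg at h; linarith
        linarith
    exact mul_pos habs hRpos
  have hSpos : 0 < ∑ y : Fin n → Bool, g y :=
    Finset.sum_pos' (fun y _ => hgnonneg y) ⟨y0, mem_univ y0, hgy0⟩
  exact ⟨(∑ y : Fin n → Bool, g y) / 2, div_pos hSpos two_pos, by linarith [hsum]⟩

lemma alpha_exp_le_iff {n : ℕ} (P : PMF (Fin n → Bool))
    (hP : ∀ y : Fin n → Bool, (P y).toReal = ∏ k, (if y k then margin P k else 1 - margin P k))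
    (i j : Fin n) :
    pexp P (fun y => alpha y i) ≤ pexp P (fun y => alpha y j) ↔ margin P i ≤ margin P j := by
  rcases eq_or_ne i j with rfl | hij
  · simp
  · obtain ⟨S, hS, hEq⟩ := key P hP hij
    constructor
    · intro h
      nlinarith
    · intro h
      nlinarith

/- ### The combinatorial core -/

/-- The contribution of an ordered pair to the linear score. -/
noncomputable def eterm {n : ℕ} (c : Fin n → ℝ) (q : TotalPreorder n) (x : Fin n × Fin n) : ℝ :=
  (c x.1 - c x.2) * ((if q.rel x.2 x.1 then (1:ℝ) else 0) - (if q.rel x.1 x.2 then (1:ℝ) else 0))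

lemma eterm_le {n : ℕ} (c : Fin n → ℝ) (q : TotalPreorder n) (x : Fin n × Fin n) :
    eterm c q x ≤ |c x.1 - c x.2| := by
  unfold eterm
  rcases Classical.em (q.rel x.2 x.1 = true) with h1 | h1 <;>
    rcases Classical.em (q.rel x.1 x.2 = true) with h2 | h2
  · rw [if_pos h1, if_pos h2]
    simpa using abs_nonneg (c x.1 - c x.2)
  · rw [if_pos h1, if_neg h2]
    simpa using le_abs_self (c x.1 - c x.2)
  · rw [if_neg h1, if_pos h2, abs_sub_comm]
    nlinarith [le_abs_self (c x.2 - c x.1)]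
  · rcases q.total x.1 x.2 with h | h
    · exact absurd h h2
    · exact absurd h h1

lemma eterm_eq_of_contained {n : ℕ} (c : Fin n → ℝ) (q : TotalPreorder n)
    (hq : q.contained (induced c)) (x : Fin n × Fin n) :
    eterm c q x = |c x.1 - c x.2| := by
  have hc : ∀ a b, q.rel a b = true → c a ≤ c b := by
    intro a b h
    have := hq a b h
    simpa [induced] using this
  unfold eterm
  rcases lt_trichotomy (c x.1) (c x.2) with h | h | h
  · have h1 : ¬ q.rel x.2 x.1 = true := fun hr => absurd (hc _ _ hr) (not_le.2 h)
    have h2 : q.rel x.1 x.2 = true := (q.total x.1 x.2).resolve_right (by simpa using h1)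
    rw [if_neg h1, if_pos h2, abs_of_neg (by linarith : c x.1 - c x.2 < 0)]
    ring
  · simp [h]
  · have h2 : ¬ q.rel x.1 x.2 = true := fun hr => absurd (hc _ _ hr) (not_le.2 h)
    have h1 : q.rel x.2 x.1 = true := (q.total x.2 x.1).resolve_right (by simpa using h2)
    rw [if_pos h1, if_neg h2, abs_of_pos (by linarith : 0 < c x.1 - c x.2)]
    ring

lemma contained_of_eterm_eq {n : ℕ} (c : Fin n → ℝ) (q : TotalPreorder n)
    (h : ∀ x : Fin n × Fin n, eterm c q x = |c x.1 - c x.2|) :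
    q.contained (induced c) := by
  intro a b hab
  show decide (c a ≤ c b) = true
  rw [decide_eq_true_eq]
  by_contra hcb
  push_neg at hcb
  have he := h (a, b)
  unfold eterm at he
  simp only at he
  rw [if_pos hab, abs_of_pos (by linarith : 0 < c a - c b)] at he
  rcases Classical.em (q.rel b a = true) with h1 | h1
  · rw [if_pos h1] at he; nlinarith
  · rw [if_neg h1] at he; nlinarith

lemma sum_eterm {n : ℕ} (c : Fin n → ℝ) (q : TotalPreorder n) :
    ∑ x : Fin n × Fin n, eterm c q x = 2 * ∑ i, c i * rho q i := by
  have expand : ∑ i, c i * rho q i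
      = ∑ i, ∑ j, c i * ((if q.rel j i then (1:ℝ) else 0)
          - (if q.rel i j then (1:ℝ) else 0)) := by
    apply Finset.sum_congr rfl
    intro i _
    rw [rho, Finset.mul_sum]
  have swap : ∑ i, ∑ j, c j * ((if q.rel j i then (1:ℝ) else 0)
        - (if q.rel i j then (1:ℝ) else 0))
      = - ∑ i, c i * rho q i := by
    rw [Finset.sum_comm, expand, ← Finset.sum_neg_distrib]
    apply Finset.sum_congr rfl
    intro i _
    rw [← Finset.sum_neg_distrib]
    apply Finset.sum_congr rfl
    intro j _
    ring
  rw [Fintype.sum_prod_type]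
  unfold eterm
  have : ∑ i, ∑ j, (c i - c j) * ((if q.rel j i then (1:ℝ) else 0)
        - (if q.rel i j then (1:ℝ) else 0))
      = (∑ i, ∑ j, c i * ((if q.rel j i then (1:ℝ) else 0)
          - (if q.rel i j then (1:ℝ) else 0)))
      - ∑ i, ∑ j, c j * ((if q.rel j i then (1:ℝ) else 0)
          - (if q.rel i j then (1:ℝ) else 0)) := by
    rw [← Finset.sum_sub_distrib]
    apply Finset.sum_congr rfl
    intro i _
    rw [← Finset.sum_sub_distrib]
    apply Finset.sum_congr rfl
    intro j _
    ring
  rw [this, swap, ← expand]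
  ring

lemma core {n : ℕ} (c : Fin n → ℝ) (p t : TotalPreorder n)
    (ht : t.contained (induced c)) :
    (∑ i, c i * rho p i ≤ ∑ i, c i * rho t i) ∧
    ((∑ i, c i * rho p i = ∑ i, c i * rho t i) ↔ p.contained (induced c)) := by
  have hdt : ∑ x : Fin n × Fin n, eterm c t x = ∑ x : Fin n × Fin n, |c x.1 - c x.2| :=
    Finset.sum_congr rfl (fun x _ => eterm_eq_of_contained c t ht x)
  have hle : ∑ x : Fin n × Fin n, eterm c p x ≤ ∑ x : Fin n × Fin n, |c x.1 - c x.2| :=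
    Finset.sum_le_sum (fun x _ => eterm_le c p x)
  have hiff : (∑ x : Fin n × Fin n, eterm c p x = ∑ x : Fin n × Fin n, |c x.1 - c x.2|)
      ↔ ∀ x ∈ (univ : Finset (Fin n × Fin n)), eterm c p x = |c x.1 - c x.2| :=
    Finset.sum_eq_sum_iff_of_le (fun x _ => eterm_le c p x)
  constructor
  · nlinarith [hle, hdt, sum_eterm c p, sum_eterm c t]
  · constructor
    · intro h
      apply contained_of_eterm_eq c p
      intro x
      have hsum : ∑ x : Fin n × Fin n, eterm c p x = ∑ x : Fin n × Fin n, |c x.1 - c x.2| := by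
        rw [sum_eterm c p, h, ← hdt, sum_eterm c t]
      exact hiff.1 hsum x (mem_univ x)
    · intro h
      have heq : ∑ x : Fin n × Fin n, eterm c p x = ∑ x : Fin n × Fin n, |c x.1 - c x.2| :=
        Finset.sum_congr rfl (fun x _ => eterm_eq_of_contained c p h x)
      nlinarith [sum_eterm c p, sum_eterm c t, heq, hdt]

/- ### Expectation of the AUC -/

lemma pexp_AUC {n : ℕ} (P : PMF (Fin n → Bool)) (q : TotalPreorder n) :
    pexp P (fun y => AUC y q)
      = 1 / 2 + 1 / 2 * ∑ i, (pexp P (fun y => alpha y i)) * rho q i := by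
  unfold pexp AUC
  have step1 : ∀ y : Fin n → Bool,
      (P y).toReal * (1 / 2 + 1 / 2 * ∑ i, alpha y i * rho q i)
      = (P y).toReal * (1 / 2) + ∑ i, 1 / 2 * ((P y).toReal * alpha y i) * rho q i := by
    intro y
    rw [Finset.mul_sum]
    rw [mul_add, Finset.mul_sum]
    congr 1
    apply Finset.sum_congr rfl
    intro i _
    ring
  rw [Finset.sum_congr rfl (fun y _ => step1 y), Finset.sum_add_distrib]
  congr 1
  · rw [← Finset.sum_mul, sum_toReal_eq_one]
    ring
  · rw [Finset.sum_comm, Finset.mul_sum]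
    apply Finset.sum_congr rfl
    intro i _
    rw [Finset.sum_mul, Finset.mul_sum]
    apply Finset.sum_congr rfl
    intro y _
    ring

lemma RstarMem_iff {n : ℕ} (P : PMF (Fin n → Bool))
    (hP : ∀ y : Fin n → Bool, (P y).toReal = ∏ k, (if y k then margin P k else 1 - margin P k))
    (q : TotalPreorder n) :
    RstarMem P q ↔ q.contained (induced (fun i => pexp P (fun y => alpha y i))) := by
  constructor <;> intro h a b hab <;> have hh := h a b hab <;>
    simp only [induced, decide_eq_true_eq] at hh ⊢
  · exact (alpha_exp_le_iff P hP a b).2 hh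
  · exact (alpha_exp_le_iff P hP a b).1 hh

/-- AUC is strictly `R*`-proper for any family of distributions under which
the coordinates are mutually independent. -/
theorem auc_strictly_Rstar_proper_of_independent
    {n : ℕ} (F : Set (PMF (Fin n → Bool)))
    (hF : ∀ P ∈ F, ∀ y : Fin n → Bool,
      (P y).toReal = ∏ i, (if y i then margin P i else 1 - margin P i)) :
    StrictlyRStarProper (fun y p => AUC y p) F := by
  intro P hPF p t ht
  have hP := hF P hPF
  set c : Fin n → ℝ := fun i => pexp P (fun y => alpha y i) with hc
  have ht' : t.contained (induced c) := (RstarMem_iff P hP t).1 ht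
  obtain ⟨hle, heq⟩ := core c p t ht'
  constructor
  · rw [pexp_AUC P p, pexp_AUC P t]
    linarith
  · rw [pexp_AUC P p, pexp_AUC P t, RstarMem_iff P hP p, ← heq]
    constructor <;> intro h <;> [linarith; linarith]
end
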